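/- arXiv:2404.10886 — 5 statements merged into one kernel-verified Lean document; each statement's English description precedes it below -/
import Mathlib

section
/- Let n ≥ 3 be a natural number, z > 0, and let f > 0 be a real number satisfying f ≥ z + (n-1)/2. Define g := z²/(z²/f + n) + n + 2 (which corresponds to f_{n+4}(z) expressed via the Bessel recurrence f_{m+2}(z) = z²/f_m(z) + m). Then g > z + (n+3)/2. -/
/-- Induction step for the lower bound `f_n(z) ≥ z + (n-1)/2`: if `f ≥ z + (n-1)/2` then
`g := z²/(z²/f + n) + n + 2` satisfies `g > z + (n+3)/2`. -/
theorem bessel_ratio_induction_step (n : ℕ) (hn : 3 ≤ n) (z f : ℝ) (hz : 0 < z)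
    (hf : 0 < f) (hfl : f ≥ z + ((n : ℝ) - 1) / 2) :
    z ^ 2 / (z ^ 2 / f + (n : ℝ)) + (n : ℝ) + 2 > z + ((n : ℝ) + 3) / 2 := by
  have hn3 : (3 : ℝ) ≤ (n : ℝ) := by exact_mod_cast hn
  set a := z ^ 2 / f with ha
  have ha0 : 0 < a := div_pos (by positivity) hf
  have haf : a * f = z ^ 2 := by rw [ha]; field_simp
  have hkey : a * (z + ((n : ℝ) - 1) / 2) ≤ z ^ 2 := by nlinarith
  have hd : 0 < a + (n : ℝ) := by linarith
  have h2 : (z - ((n : ℝ) + 1) / 2) * (a + (n : ℝ)) < z ^ 2 := by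
    rcases le_or_gt z (((n : ℝ) + 1) / 2) with h | h
    · nlinarith
    · have hp : (0 : ℝ) < z + ((n : ℝ) - 1) / 2 := by linarith
      have hK : 0 ≤ (z - ((n : ℝ) + 1) / 2) * (z ^ 2 - a * (z + ((n : ℝ) - 1) / 2)) :=
        mul_nonneg (by linarith) (by linarith)
      have hE : (z ^ 2 - (z - ((n : ℝ) + 1) / 2) * (a + (n : ℝ))) * (z + ((n : ℝ) - 1) / 2)
          = (z - ((n : ℝ) + 1) / 2) * (z ^ 2 - a * (z + ((n : ℝ) - 1) / 2))
            + (n : ℝ) * z + (n : ℝ) * ((n : ℝ) ^ 2 - 1) / 4 := by ring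
      have hnz : 0 < (n : ℝ) * z := by positivity
      have hnn : 0 ≤ (n : ℝ) * ((n : ℝ) ^ 2 - 1) / 4 := by nlinarith
      have hmul : 0 < (z ^ 2 - (z - ((n : ℝ) + 1) / 2) * (a + (n : ℝ)))
          * (z + ((n : ℝ) - 1) / 2) := by rw [hE]; linarith
      rcases mul_pos_iff.mp hmul with ⟨h1, _⟩ | ⟨_, h2⟩
      · linarith
      · linarith
  have h3 : z - ((n : ℝ) + 1) / 2 < z ^ 2 / (a + (n : ℝ)) := by
    rw [lt_div_iff₀ hd]; exact h2
  linarith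
end

section
/- Let n ≥ 3 be a natural number, z > 0, and let f, a be real numbers with f > z, a > −(n−2), and a = f² − (n−1)f − z² (so f, a correspond to f_n(z), a_n(z)). Define a' := −(n+2) + z²·(z²·a + n·f²)/(n·f + z²)². Then a' > −(n+2). -/
/-- Induction step for `a_n(z) > −(n−2)`: with `f > z`, `a > −(n−2)` and
`a = f² − (n−1)f − z²`, the quantity `a' = −(n+2) + z²(z²a + nf²)/(nf + z²)²`
satisfies `a' > −(n+2)`. -/
theorem a_n_induction_step (n : ℕ) (hn : 3 ≤ n) (z f a : ℝ) (hz : 0 < z)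
    (hfz : f > z) (ha : a > -((n : ℝ) - 2))
    (hae : a = f ^ 2 - ((n : ℝ) - 1) * f - z ^ 2) :
    -((n : ℝ) + 2) + z ^ 2 * (z ^ 2 * a + (n : ℝ) * f ^ 2) / ((n : ℝ) * f + z ^ 2) ^ 2 >
      -((n : ℝ) + 2) := by
  have hn3 : (3:ℝ) ≤ (n:ℝ) := by exact_mod_cast hn
  have hf : 0 < f := lt_trans hz hfz
  have hnum : 0 < z ^ 2 * a + (n : ℝ) * f ^ 2 := by
    have hf2 : z ^ 2 < f ^ 2 := by nlinarith
    nlinarith [mul_lt_mul_of_pos_left ha (pow_pos hz 2),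
      mul_nonneg (by linarith : (0:ℝ) ≤ (n:ℝ) - 2) (le_of_lt (sub_pos.2 hf2)),
      pow_pos hz 2]
  have hden : 0 < ((n : ℝ) * f + z ^ 2) ^ 2 := by positivity
  have : 0 < z ^ 2 * (z ^ 2 * a + (n : ℝ) * f ^ 2) / ((n : ℝ) * f + z ^ 2) ^ 2 := by
    positivity
  linarith
end

section
/- Let n ≥ 2, k ≥ 1 be natural numbers, z > 0, R > 0, and let f_m(z) satisfy the recurrence f_{m+2}(z) = z²/f_m(z) + m with all f_m(z) > 0. Define μ_k(z) := (−f_n(z) + f_{n+2k}(z) − k)/R and a_m(z) := f_m(z)² − (m−1)f_m(z) − z². If a_{n+2k}(z) < 0 for all k ≥ 0, then μ_{k+1}(z) > μ_k(z) for all k ≥ 1, and μ₁(z) > 0 = μ₀(z). -/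
/-- Ordering of the exterior Steklov-type eigenvalues: with `f` satisfying the Bessel
recurrence `f(m+2) = z²/f(m) + m`, all `f(m) > 0`, and `a_{n+2k}(z) < 0` for all `k`,
the eigenvalues `μ_k = (−f(n) + f(n+2k) − k)/R` satisfy `μ_{k+1} > μ_k` for `k ≥ 1`,
`μ₁ > 0` and `μ₀ = 0`. -/
theorem steklov_eigenvalue_ordering (n : ℕ) (hn : 2 ≤ n) (z R : ℝ) (hz : 0 < z)
    (hR : 0 < R) (f : ℕ → ℝ)
    (hfpos : ∀ m, 0 < f m)
    (hrec : ∀ m, f (m + 2) = z ^ 2 / f m + (m : ℝ))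
    (μ : ℕ → ℝ)
    (hμ : ∀ k, μ k = (-(f n) + f (n + 2 * k) - (k : ℝ)) / R)
    (ha : ∀ k : ℕ, (f (n + 2 * k)) ^ 2 - ((n : ℝ) + 2 * k - 1) * f (n + 2 * k) - z ^ 2 < 0) :
    (∀ k : ℕ, 1 ≤ k → μ (k + 1) > μ k) ∧ μ 1 > 0 ∧ μ 0 = 0 := by
  have key : ∀ k : ℕ, 1 < f (n + 2 * (k + 1)) - f (n + 2 * k) := by
    intro k
    have hF := hfpos (n + 2 * k)
    have hrec' : f (n + 2 * (k + 1)) = z ^ 2 / f (n + 2 * k) + ((n : ℝ) + 2 * k) := by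
      have := hrec (n + 2 * k)
      have h1 : n + 2 * (k + 1) = n + 2 * k + 2 := by ring
      rw [h1, this]
      push_cast
      ring
    rw [hrec']
    have hz2 : z ^ 2 / f (n + 2 * k) * f (n + 2 * k) = z ^ 2 :=
      div_mul_cancel₀ _ hF.ne'
    nlinarith [ha k, hF, hz2]
  have key2 : ∀ k : ℕ, μ (k + 1) - μ k = (f (n + 2 * (k + 1)) - f (n + 2 * k) - 1) / R := by
    intro k
    rw [hμ, hμ]
    push_cast
    ring
  have main : ∀ k : ℕ, μ (k + 1) > μ k := by
    intro k
    have h := key k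
    have : 0 < μ (k + 1) - μ k := by
      rw [key2 k]
      exact div_pos (by linarith [key k]) hR
    linarith
  refine ⟨fun k _ => main k, ?_, ?_⟩
  · have := main 0
    have h0 : μ 0 = 0 := by
      rw [hμ]; simp
    linarith
  · rw [hμ]; simp
end

section
/- Let n ≥ 2, z > 0, and let y := f_n(z) satisfy n − 2 < y. Suppose f_n satisfies Segura's upper bound f_n(w) < (n−1)/2 + √((n−1)²/4 + w²) for all w > 0. If z₀ := √(y² − (n−1)y) is a positive real (i.e. y > n−1), then f_n(z₀) < y. Consequently, the equation f_n(z)² − (n−1)f_n(z) − z² = 0 has no solution z > 0 with f_n(z) ≥ n−1. -/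
/-- If `f_n` satisfies Segura's upper bound `f_n(w) < (n−1)/2 + √((n−1)²/4 + w²)` for all
`w > 0`, and `y = f_n(z) > n − 2`, then whenever `y > n − 1` one has
`f_n(√(y² − (n−1)y)) < y`; consequently the equation `f_n(w)² − (n−1)f_n(w) − w² = 0`
has no solution `w > 0` with `f_n(w) ≥ n − 1`. -/
theorem a_n_no_zero (n : ℕ) (hn : 2 ≤ n) (fn : ℝ → ℝ) (z : ℝ) (hz : 0 < z)
    (hy : (n : ℝ) - 2 < fn z)
    (hub : ∀ w > (0 : ℝ), fn w < ((n : ℝ) - 1) / 2 +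
      Real.sqrt (((n : ℝ) - 1) ^ 2 / 4 + w ^ 2)) :
    ((n : ℝ) - 1 < fn z →
      fn (Real.sqrt ((fn z) ^ 2 - ((n : ℝ) - 1) * fn z)) < fn z) ∧
    ¬ ∃ w > (0 : ℝ), (fn w) ^ 2 - ((n : ℝ) - 1) * fn w - w ^ 2 = 0 ∧
        (n : ℝ) - 1 ≤ fn w := by
  have hn1 : (1:ℝ) ≤ (n:ℝ) - 1 := by
    have : (2:ℝ) ≤ (n:ℝ) := by exact_mod_cast hn
    linarith
  constructor
  · intro h
    set y := fn z with hy'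
    have hy0 : 0 < y := by linarith
    have hpos : 0 < y^2 - ((n:ℝ)-1)*y := by nlinarith
    have hz0 : 0 < Real.sqrt (y^2 - ((n:ℝ)-1)*y) := Real.sqrt_pos.mpr hpos
    have hb := hub _ hz0
    rw [Real.sq_sqrt hpos.le] at hb
    have hsq : ((n:ℝ)-1)^2/4 + (y^2 - ((n:ℝ)-1)*y) = (y - ((n:ℝ)-1)/2)^2 := by ring
    rw [hsq, Real.sqrt_sq (by linarith)] at hb
    linarith
  · rintro ⟨w, hw, heq, hge⟩
    have hb := hub w hw
    have hw2 : w^2 = (fn w)^2 - ((n:ℝ)-1)*(fn w) := by linarith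
    rw [hw2] at hb
    have hsq : ((n:ℝ)-1)^2/4 + ((fn w)^2 - ((n:ℝ)-1)*(fn w)) = (fn w - ((n:ℝ)-1)/2)^2 := by ring
    rw [hsq, Real.sqrt_sq (by linarith)] at hb
    linarith
end

section
/- Let n ≥ 6, y > n − 2, and z > 0 with z² > 0. Assume y < (n−1)/2 + √((n−1)²/4 + z²) (Segura's upper bound for f_n(z)). If z₀² := −(ny − 2n − 2)·n·y·(ny − y² − 2n − 2)/(ny − 2n − 2)² is positive, then (n−2)/2 + √((n−2)²/4 + z₀²) − y > 0; equivalently 2y − n + 2 > 0 implies ((n−2−2y)² < (−8 + n³(y−2) + n²(−4y²+4y+6) + n(4y³+12y))/(−2 + (y−2)n)), which reduces to 8y(2n + y + 2)/((y−2)n − 2) > 0. -/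
/-!
With `A = (y - 2) n - 2 > 0` (true as `y > n - 2 ≥ 4`) one has the identity
`(n - 2)² / 4 + z₀² = (y - (n - 2) / 2)² + 2 y (2 n + y + 2) / A`,
so the square root in Segura's lower bound at `z₀` strictly exceeds `y - (n - 2) / 2 ≥ 0`.
The second claim is four times the same identity.
-/

namespace DegreeTwo

variable {n y : ℝ}

lemma excess_pos (hn : 0 < n) (hA : 0 < (y - 2) * n - 2) :
    0 < 8 * y * (2 * n + y + 2) / ((y - 2) * n - 2) := by
  have hy : 2 < y := by nlinarith
  exact div_pos (by positivity) hA

lemma quarter_sq_add_zeroSq_eq (hA : (y - 2) * n - 2 ≠ 0) :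
    (n - 2) ^ 2 / 4 + -(n * y - 2 * n - 2) * n * y * (n * y - y ^ 2 - 2 * n - 2) /
        (n * y - 2 * n - 2) ^ 2 =
      (y - (n - 2) / 2) ^ 2 + 8 * y * (2 * n + y + 2) / ((y - 2) * n - 2) / 4 := by
  rw [show n * y - 2 * n - 2 = (y - 2) * n - 2 by ring]
  -- `field_simp` only clears the denominator when it is an atom
  generalize hAdef : (y - 2) * n - 2 = A at hA ⊢
  field_simp
  subst hAdef
  ring

lemma numerator_div_eq_sq_add_excess (hA : -2 + (y - 2) * n ≠ 0) :
    (-8 + n ^ 3 * (y - 2) + n ^ 2 * (-4 * y ^ 2 + 4 * y + 6) + n * (4 * y ^ 3 + 12 * y)) /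
        (-2 + (y - 2) * n) =
      (n - 2 - 2 * y) ^ 2 + 8 * y * (2 * n + y + 2) / ((y - 2) * n - 2) := by
  rw [show (y - 2) * n - 2 = -2 + (y - 2) * n by ring, div_eq_iff hA, add_mul,
    div_mul_cancel₀ _ hA]
  ring

end DegreeTwo

open DegreeTwo in
theorem degree_two_no_zero_general (n : ℕ) (hn : 6 ≤ n) (y : ℝ) (hy : (n : ℝ) - 2 < y) :
    0 < -((n : ℝ) * y - 2 * n - 2) * (n : ℝ) * y * ((n : ℝ) * y - y ^ 2 - 2 * n - 2) /
        ((n : ℝ) * y - 2 * n - 2) ^ 2 →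
      (((n : ℝ) - 2) / 2 + Real.sqrt (((n : ℝ) - 2) ^ 2 / 4 +
          -((n : ℝ) * y - 2 * n - 2) * (n : ℝ) * y * ((n : ℝ) * y - y ^ 2 - 2 * n - 2) /
            ((n : ℝ) * y - 2 * n - 2) ^ 2) - y > 0) ∧
      (0 < 2 * y - (n : ℝ) + 2 →
        ((n : ℝ) - 2 - 2 * y) ^ 2 <
          (-8 + (n : ℝ) ^ 3 * (y - 2) + (n : ℝ) ^ 2 * (-4 * y ^ 2 + 4 * y + 6) +
            (n : ℝ) * (4 * y ^ 3 + 12 * y)) / (-2 + (y - 2) * (n : ℝ))) ∧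
      8 * y * (2 * (n : ℝ) + y + 2) / ((y - 2) * (n : ℝ) - 2) > 0 := by
  intro _
  have hn6 : (6 : ℝ) ≤ n := by exact_mod_cast hn
  have hA : 0 < (y - 2) * (n : ℝ) - 2 := by nlinarith
  have hexcess := excess_pos (by linarith) hA
  refine ⟨?_, fun _ => ?_, hexcess⟩
  · have hbase : 0 ≤ y - ((n : ℝ) - 2) / 2 := by linarith
    have hlt : y - ((n : ℝ) - 2) / 2 < Real.sqrt ((y - ((n : ℝ) - 2) / 2) ^ 2 +
        8 * y * (2 * (n : ℝ) + y + 2) / ((y - 2) * (n : ℝ) - 2) / 4) :=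
      (Real.lt_sqrt hbase).2 (by linarith)
    rw [quarter_sq_add_zeroSq_eq hA.ne']
    linarith
  · rw [numerator_div_eq_sq_add_excess (by linarith)]
    linarith

/-- Key step for `L(α, n, 2, R) < 0` when `n ≥ 6`: at the candidate zero `z₀`, Segura's
bounds lead to a contradiction. -/
theorem degree_two_no_zero (n : ℕ) (hn : 6 ≤ n) (y z : ℝ) (hy : (n : ℝ) - 2 < y)
    (hz : 0 < z)
    (hub : y < ((n : ℝ) - 1) / 2 + Real.sqrt (((n : ℝ) - 1) ^ 2 / 4 + z ^ 2)) :
    0 < -((n : ℝ) * y - 2 * n - 2) * (n : ℝ) * y * ((n : ℝ) * y - y ^ 2 - 2 * n - 2) /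
        ((n : ℝ) * y - 2 * n - 2) ^ 2 →
      (((n : ℝ) - 2) / 2 + Real.sqrt (((n : ℝ) - 2) ^ 2 / 4 +
          -((n : ℝ) * y - 2 * n - 2) * (n : ℝ) * y * ((n : ℝ) * y - y ^ 2 - 2 * n - 2) /
            ((n : ℝ) * y - 2 * n - 2) ^ 2) - y > 0) ∧
      (0 < 2 * y - (n : ℝ) + 2 →
        ((n : ℝ) - 2 - 2 * y) ^ 2 <
          (-8 + (n : ℝ) ^ 3 * (y - 2) + (n : ℝ) ^ 2 * (-4 * y ^ 2 + 4 * y + 6) +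
            (n : ℝ) * (4 * y ^ 3 + 12 * y)) / (-2 + (y - 2) * (n : ℝ))) ∧
      8 * y * (2 * (n : ℝ) + y + 2) / ((y - 2) * (n : ℝ) - 2) > 0 :=
  degree_two_no_zero_general n hn y hy
end
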